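/- Let X be a Banach space, f : X → ℝ satisfy the θ-bilipschitz condition with constant K in a neighborhood of u: |f(z+2x) − 2f(z+x) − f(z+2y) + 2f(z+y)| ≤ K‖x−y‖^θ(‖x‖+‖y‖)^{2−θ} for x, y ∈ εB, z ∈ u+εB, 0 < θ ≤ 2. Then the function f^{{2}+}(u; ·) defined by f^{{2}+}(u;x) = sup_{w∈X} limsup_{λ↓0} λ⁻²(f(u+λw+2λx) − 2f(u+λw+λx) + f(u+λw)) satisfies |f^{{2}+}(u;x) − f^{{2}+}(u;v)| ≤ K‖x−v‖^θ(‖x‖+‖v‖)^{2−θ} for all x, v ∈ X. -/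

import Mathlib

/-- The second-order upper directional quantity
`f^{{2}+}(u; x) = sup_{w∈X} limsup_{λ↓0} λ⁻²(f(u+λw+2λx) − 2f(u+λw+λx) + f(u+λw))`,
valued in the extended reals. -/
noncomputable def secondUpperAt {X : Type*} [NormedAddCommGroup X] [NormedSpace ℝ X]
    (f : X → ℝ) (u x : X) : EReal :=
  ⨆ w : X, Filter.limsup
    (fun lam : ℝ =>
      (((f (u + lam • w + (2 * lam) • x) - 2 * f (u + lam • w + lam • x)
        + f (u + lam • w)) / lam ^ 2 : ℝ) : EReal))
    (nhdsWithin (0:ℝ) (Set.Ioi 0))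

/-!
The bilipschitz bound `K‖x−y‖^θ(‖x‖+‖y‖)^{2−θ}` is homogeneous of degree 2, so applying the
hypothesis at `z = u + λw` to `λx, λv` shows that the difference quotients defining
`f^{{2}+}(u; x)` and `f^{{2}+}(u; v)` differ by at most `K‖x−v‖^θ(‖x‖+‖v‖)^{2−θ}` for all small
`λ > 0`. This survives the `limsup` as `λ ↓ 0` and then the supremum over `w`.
-/

open Filter Topology

theorem EReal.limsup_le_limsup_add_const {α : Type*} {l : Filter α} [NeBot l] {a b : α → ℝ}
    {C : ℝ} (h : ∀ᶠ t in l, a t ≤ b t + C) :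
    limsup (fun t => (a t : EReal)) l ≤ limsup (fun t => (b t : EReal)) l + C := by
  have hconst : limsup (fun _ : α => (C : EReal)) l = C := limsup_const _
  calc limsup (fun t => (a t : EReal)) l
      ≤ limsup ((fun t => (b t : EReal)) + fun _ => (C : EReal)) l :=
        limsup_le_limsup (h.mono fun t ht => show (a t : EReal) ≤ b t + C by exact_mod_cast ht)
    _ ≤ limsup (fun t => (b t : EReal)) l + C := by
        refine (EReal.limsup_add_le (.inr ?_) (.inr ?_)).trans_eq (by rw [hconst])
        · rw [hconst]; exact EReal.coe_ne_top C
        · rw [hconst]; exact EReal.coe_ne_bot C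

section SecondQuotient

variable {X : Type*} [NormedAddCommGroup X] [NormedSpace ℝ X]

noncomputable def secondQuotient (f : X → ℝ) (u w x : X) (lam : ℝ) : ℝ :=
  (f (u + lam • w + (2 * lam) • x) - 2 * f (u + lam • w + lam • x) + f (u + lam • w)) / lam ^ 2

theorem secondUpperAt_eq_iSup_limsup (f : X → ℝ) (u x : X) :
    secondUpperAt f u x =
      ⨆ w : X, limsup (fun lam => (secondQuotient f u w x lam : EReal)) (𝓝[>] 0) :=
  rfl

theorem bilipschitz_bound_smul (K θ : ℝ) {lam : ℝ} (hlam : 0 < lam) (x v : X) :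
    K * ‖lam • x - lam • v‖ ^ θ * (‖lam • x‖ + ‖lam • v‖) ^ (2 - θ)
      = lam ^ 2 * (K * ‖x - v‖ ^ θ * (‖x‖ + ‖v‖) ^ (2 - θ)) := by
  have hpow : lam ^ θ * lam ^ (2 - θ) = lam ^ 2 := by
    rw [← Real.rpow_add hlam]; norm_num
  rw [← smul_sub, norm_smul, norm_smul, norm_smul, Real.norm_of_nonneg hlam.le, ← mul_add,
    Real.mul_rpow hlam.le (norm_nonneg _), Real.mul_rpow hlam.le (by positivity)]
  linear_combination (K * ‖x - v‖ ^ θ * (‖x‖ + ‖v‖) ^ (2 - θ)) * hpow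

theorem secondQuotient_le_add (f : X → ℝ) (u w x v : X) {lam C : ℝ} (hlam : 0 < lam)
    (h : |f (u + lam • w + 2 • (lam • x)) - 2 * f (u + lam • w + lam • x)
        - f (u + lam • w + 2 • (lam • v)) + 2 * f (u + lam • w + lam • v)| ≤ lam ^ 2 * C) :
    secondQuotient f u w x lam ≤ secondQuotient f u w v lam + C := by
  have htwo : ∀ y : X, (2 : ℕ) • (lam • y) = (2 * lam) • y := fun y => by
    rw [two_nsmul, ← add_smul, two_mul]
  have hlam2 : 0 < lam ^ 2 := by positivity
  rw [htwo, htwo] at h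
  rw [secondQuotient, secondQuotient, div_add' _ _ _ hlam2.ne', div_le_div_iff_of_pos_right hlam2]
  linarith [(abs_le.mp h).2]

theorem eventually_norm_smul_le (y : X) {ε : ℝ} (hε : 0 < ε) :
    ∀ᶠ lam in 𝓝[>] (0 : ℝ), ‖lam • y‖ ≤ ε := by
  have hlim : Tendsto (fun lam : ℝ => ‖lam • y‖) (𝓝 0) (𝓝 0) := by
    simpa using ((tendsto_id (x := 𝓝 (0 : ℝ))).smul_const y).norm
  exact nhdsWithin_le_nhds (hlim.eventually (ge_mem_nhds hε))

theorem secondUpperAt_le_add_of_bilipschitz {f : X → ℝ} {u : X} {θ K ε : ℝ} (hε : 0 < ε)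
    (hf : ∀ x y z : X, ‖x‖ ≤ ε → ‖y‖ ≤ ε → ‖z - u‖ ≤ ε →
      |f (z + 2 • x) - 2 * f (z + x) - f (z + 2 • y) + 2 * f (z + y)|
        ≤ K * ‖x - y‖ ^ θ * (‖x‖ + ‖y‖) ^ (2 - θ))
    (x v : X) :
    secondUpperAt f u x
      ≤ secondUpperAt f u v + ((K * ‖x - v‖ ^ θ * (‖x‖ + ‖v‖) ^ (2 - θ) : ℝ) : EReal) := by
  simp only [secondUpperAt_eq_iSup_limsup]
  refine iSup_le fun w => le_trans ?_ (add_le_add_left (le_iSup _ w) _)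
  refine EReal.limsup_le_limsup_add_const ?_
  filter_upwards [self_mem_nhdsWithin, eventually_norm_smul_le x hε, eventually_norm_smul_le v hε,
    eventually_norm_smul_le w hε] with lam hlam hx hv hw
  refine secondQuotient_le_add f u w x v hlam ?_
  rw [← bilipschitz_bound_smul K θ hlam]
  exact hf _ _ _ hx hv (by simpa using hw)

end SecondQuotient

theorem stmt15_general {X : Type*} [NormedAddCommGroup X] [NormedSpace ℝ X]
    (f : X → ℝ) (u : X) (θ K ε : ℝ)
    (hε : 0 < ε)
    (hf : ∀ x y z : X, ‖x‖ ≤ ε → ‖y‖ ≤ ε → ‖z - u‖ ≤ ε →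
      |f (z + 2 • x) - 2 * f (z + x) - f (z + 2 • y) + 2 * f (z + y)|
        ≤ K * ‖x - y‖ ^ θ * (‖x‖ + ‖y‖) ^ (2 - θ))
    (x v : X) :
    secondUpperAt f u x
        ≤ secondUpperAt f u v + ((K * ‖x - v‖ ^ θ * (‖x‖ + ‖v‖) ^ (2 - θ) : ℝ) : EReal)
    ∧ secondUpperAt f u v
        ≤ secondUpperAt f u x + ((K * ‖x - v‖ ^ θ * (‖x‖ + ‖v‖) ^ (2 - θ) : ℝ) : EReal) := by
  refine ⟨secondUpperAt_le_add_of_bilipschitz hε hf x v, ?_⟩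
  simpa only [norm_sub_rev v x, add_comm ‖v‖] using secondUpperAt_le_add_of_bilipschitz hε hf v x

theorem stmt15 {X : Type*} [NormedAddCommGroup X] [NormedSpace ℝ X] [CompleteSpace X]
    (f : X → ℝ) (u : X) (θ K ε : ℝ)
    (hθ0 : 0 < θ) (hθ2 : θ ≤ 2) (hK : 0 < K) (hε : 0 < ε)
    (hf : ∀ x y z : X, ‖x‖ ≤ ε → ‖y‖ ≤ ε → ‖z - u‖ ≤ ε →
      |f (z + 2 • x) - 2 * f (z + x) - f (z + 2 • y) + 2 * f (z + y)|
        ≤ K * ‖x - y‖ ^ θ * (‖x‖ + ‖y‖) ^ (2 - θ))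
    (x v : X) :
    secondUpperAt f u x
        ≤ secondUpperAt f u v + ((K * ‖x - v‖ ^ θ * (‖x‖ + ‖v‖) ^ (2 - θ) : ℝ) : EReal)
    ∧ secondUpperAt f u v
        ≤ secondUpperAt f u x + ((K * ‖x - v‖ ^ θ * (‖x‖ + ‖v‖) ^ (2 - θ) : ℝ) : EReal) :=
  stmt15_general f u θ K ε hε hf x v
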